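/- In any partial reduction G_RB^k of a maximal connected graph, at least one of the sets C_C (inactive characters whose neighborhood is contained in S_R) and C_U (inactive characters with a neighbor in S_B that are universal for S_R) is empty. -/

import Mathlib

open Classical

/-- A red-black graph: a bipartite graph on characters `C` and species `S`
with edges colored black or red. -/
structure RBGraph (S C : Type) where
  black : C → S → Prop
  red : C → S → Prop

namespace RBGraph

variable {S C : Type}

/-- `c` and `s` are adjacent (by an edge of either color). -/
def adj (G : RBGraph S C) (c : C) (s : S) : Prop := G.black c s ∨ G.red c s

/-- The underlying simple graph on `S ⊕ C`. -/
def toSimple (G : RBGraph S C) : SimpleGraph (S ⊕ C) where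
  Adj x y := (∃ s c, x = Sum.inl s ∧ y = Sum.inr c ∧ G.adj c s) ∨
             (∃ s c, x = Sum.inr c ∧ y = Sum.inl s ∧ G.adj c s)
  symm := ⟨by
    rintro x y (⟨s, c, rfl, rfl, h⟩ | ⟨s, c, rfl, rfl, h⟩)
    · exact Or.inr ⟨s, c, rfl, rfl, h⟩
    · exact Or.inl ⟨s, c, rfl, rfl, h⟩⟩
  loopless := ⟨by
    rintro x (⟨s, c, rfl, h, -⟩ | ⟨s, c, rfl, h, -⟩) <;> simp at h⟩

/-- `s` lies in the connected component of `c`. -/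
def sameComp (G : RBGraph S C) (c : C) (s : S) : Prop :=
  G.toSimple.Reachable (Sum.inr c) (Sum.inl s)

/-- A character is active if it is incident to a red edge. -/
def active (G : RBGraph S C) (c : C) : Prop := ∃ s, G.red c s

/-- A character is inactive if it is incident to no red edge. -/
def inactive (G : RBGraph S C) (c : C) : Prop := ¬ G.active c

/-- A character adjacent via red edges to all species of its connected component. -/
def redUniversal (G : RBGraph S C) (c : C) : Prop :=
  G.active c ∧ ∀ s, G.sameComp c s → G.red c s

/-- Remove all edges of red-universal characters (one round). -/
def pruneStep (G : RBGraph S C) : RBGraph S C :=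
  ⟨fun c s => G.black c s ∧ ¬ G.redUniversal c,
   fun c s => G.red c s ∧ ¬ G.redUniversal c⟩

/-- Repeatedly remove all edges of red-universal characters. -/
def prune [Fintype C] (G : RBGraph S C) : RBGraph S C :=
  pruneStep^[Fintype.card C] G

/-- Realization of a character `c`: add red edges from `c` to the species of its
connected component not adjacent to `c`, delete the black edges of `c`, then
repeatedly remove the edges of red-universal characters. -/
def realize [Fintype C] (G : RBGraph S C) (c : C) : RBGraph S C :=
  prune ⟨fun c' s => G.black c' s ∧ c' ≠ c,
         fun c' s => G.red c' s ∨ (c' = c ∧ ¬ G.black c s ∧ G.sameComp c s)⟩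

/-- Realize a sequence of characters in order. -/
def realizeSeq [Fintype C] (G : RBGraph S C) (l : List C) : RBGraph S C :=
  l.foldl realize G

/-- The graph has no edges. -/
def edgeless (G : RBGraph S C) : Prop := ∀ c s, ¬ G.adj c s

/-- A red Σ-graph: an induced all-red path `s1 - c1 - s2 - c2 - s3`. -/
def redSigma (G : RBGraph S C) : Prop :=
  ∃ (c1 c2 : C) (s1 s2 s3 : S), c1 ≠ c2 ∧ s1 ≠ s2 ∧ s2 ≠ s3 ∧ s1 ≠ s3 ∧
    G.red c1 s1 ∧ G.red c1 s2 ∧ G.red c2 s2 ∧ G.red c2 s3 ∧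
    ¬ G.adj c1 s3 ∧ ¬ G.adj c2 s1

/-- A reduction of a red-black graph: an ordering of its (non-isolated) inactive
characters whose successive realizations yield an edgeless graph, never creating
a red Σ-graph. -/
def isReductionFrom [Fintype C] (G : RBGraph S C) (l : List C) : Prop :=
  l.Nodup ∧ (∀ c, G.inactive c → (∃ s, G.black c s) → c ∈ l) ∧
  (∀ c ∈ l, G.inactive c) ∧
  edgeless (realizeSeq G l) ∧
  ∀ k ≤ l.length, ¬ redSigma (realizeSeq G (l.take k))

/-- A red-black graph is reducible if it admits a reduction. -/
def reducible [Fintype C] (G : RBGraph S C) : Prop := ∃ l, isReductionFrom G l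

/-- A character is safe if its realization yields a reducible red-black graph. -/
def safe [Fintype C] (G : RBGraph S C) (c : C) : Prop := reducible (G.realize c)

/-- The (all-black) red-black graph of a binary species-character matrix. -/
def ofMatrix (M : C → S → Prop) : RBGraph S C := ⟨M, fun _ _ => False⟩

/-- A reduction of the graph of a matrix: an ordering of all characters whose
successive realizations yield an edgeless graph, never creating a red Σ-graph. -/
def isReduction [Fintype C] (M : C → S → Prop) (l : List C) : Prop :=
  l.Nodup ∧ (∀ c, c ∈ l) ∧ edgeless (realizeSeq (ofMatrix M) l) ∧
  ∀ k ≤ l.length, ¬ redSigma (realizeSeq (ofMatrix M) (l.take k))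

/-- The partial reduction after realizing the first `t` characters of `l`. -/
def partialRed [Fintype C] (M : C → S → Prop) (l : List C) (t : ℕ) : RBGraph S C :=
  realizeSeq (ofMatrix M) (l.take t)

/-- The matrix is maximal: no character's species set is contained in that of
another character. -/
def MaximalM (M : C → S → Prop) : Prop :=
  ∀ c1 c2 : C, c1 ≠ c2 → ¬ (∀ s, M c1 s → M c2 s)

/-- A vertex is non-isolated if it has an incident edge. -/
def nonIsolated (G : RBGraph S C) : S ⊕ C → Prop
  | Sum.inl s => ∃ c, G.adj c s
  | Sum.inr c => ∃ s, G.adj c s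

/-- The graph has a single connected component (ignoring isolated vertices). -/
def singleComponent (G : RBGraph S C) : Prop :=
  ∀ x y, G.nonIsolated x → G.nonIsolated y → G.toSimple.Reachable x y

/-- Species incident only to black edges (and at least one of them). -/
def SB (G : RBGraph S C) : Set S := {s | (∃ c, G.black c s) ∧ ∀ c, ¬ G.red c s}

/-- Species incident to at least one red edge. -/
def SR (G : RBGraph S C) : Set S := {s | ∃ c, G.red c s}

/-- Inactive characters whose neighborhood is contained in `S_R`. -/
def CC (G : RBGraph S C) : Set C :=
  {c | G.inactive c ∧ (∃ s, G.black c s) ∧ ∀ s, G.black c s → s ∈ G.SR}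

/-- Inactive characters with a neighbor and a non-neighbor in `S_R`. -/
def CI (G : RBGraph S C) : Set C :=
  {c | G.inactive c ∧ (∃ s ∈ G.SR, G.black c s) ∧ (∃ s ∈ G.SR, ¬ G.black c s)}

/-- Inactive characters with a neighbor in `S_B` that are universal on `S_R`. -/
def CU (G : RBGraph S C) : Set C :=
  {c | G.inactive c ∧ (∃ s ∈ G.SB, G.black c s) ∧ ∀ s ∈ G.SR, G.black c s}

/-- The subgraph induced by a set of characters and a set of species. -/
def induced (G : RBGraph S C) (Cs : Set C) (Ss : Set S) : RBGraph S C :=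
  ⟨fun c s => G.black c s ∧ c ∈ Cs ∧ s ∈ Ss,
   fun c s => G.red c s ∧ c ∈ Cs ∧ s ∈ Ss⟩

/-- `c2` is the center of an induced path on four species and three characters. -/
def isP7Center (M : C → S → Prop) (c2 : C) : Prop :=
  ∃ (c1 c3 : C) (s1 s2 s3 s4 : S),
    c1 ≠ c2 ∧ c2 ≠ c3 ∧ c1 ≠ c3 ∧
    s1 ≠ s2 ∧ s1 ≠ s3 ∧ s1 ≠ s4 ∧ s2 ≠ s3 ∧ s2 ≠ s4 ∧ s3 ≠ s4 ∧
    M c1 s1 ∧ M c1 s2 ∧ M c2 s2 ∧ M c2 s3 ∧ M c3 s3 ∧ M c3 s4 ∧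
    ¬ M c1 s3 ∧ ¬ M c1 s4 ∧ ¬ M c2 s1 ∧ ¬ M c2 s4 ∧ ¬ M c3 s1 ∧ ¬ M c3 s2

/-- Minimum-degree species none of whose characters is the center of an induced `P7`. -/
def S7m (M : C → S → Prop) : Set S :=
  {s | (∀ s', {c | M c s}.ncard ≤ {c | M c s'}.ncard) ∧
       ∀ c, M c s → ¬ isP7Center M c}

/-- The species of `S_B` not adjacent to `cm`. -/
def SBm (G : RBGraph S C) (cm : C) : Set S := {s | s ∈ G.SB ∧ ¬ G.black cm s}

/-- `C_I` together with the characters of `C_U` with a neighbor in `S_B^m`. -/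
def CBm (G : RBGraph S C) (cm : C) : Set C :=
  G.CI ∪ {c ∈ G.CU | ∃ s ∈ G.SBm cm, G.black c s}

end RBGraph

/-!
Black edges are never created during a reduction: realizing a character deletes all of its
black edges, and pruning deletes all edges of a red-universal character. So in a partial
reduction of the graph of `M` the black neighbourhood of every character is either empty or
its whole row of `M`. A character `c ∈ C_C` has its row inside `S_R`, and a character
`c' ∈ C_U` is black-adjacent to all of `S_R`, so the row of `c` is contained in the row of `c'`;
and `c ≠ c'` because `c'` has a neighbour in `S_B`. This contradicts maximality.
-/

namespace RBGraph

variable {S C : Type}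

def BlackRowsOf (G : RBGraph S C) (M : C → S → Prop) : Prop :=
  ∀ c, (∃ s, G.black c s) → ∀ s, G.black c s ↔ M c s

theorem blackRowsOf_ofMatrix (M : C → S → Prop) : (ofMatrix M).BlackRowsOf M :=
  fun _ _ _ => Iff.rfl

theorem BlackRowsOf.of_black_iff {G G' : RBGraph S C} {M : C → S → Prop}
    (h : G.BlackRowsOf M) (P : C → Prop) (hG' : ∀ c s, G'.black c s ↔ G.black c s ∧ P c) :
    G'.BlackRowsOf M := by
  rintro c ⟨s₀, hs₀⟩ s
  obtain ⟨hs₀, hc⟩ := (hG' c s₀).1 hs₀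
  rw [hG', ← h c ⟨s₀, hs₀⟩ s]
  exact and_iff_left hc

theorem BlackRowsOf.pruneStep {G : RBGraph S C} {M : C → S → Prop} (h : G.BlackRowsOf M) :
    G.pruneStep.BlackRowsOf M :=
  h.of_black_iff _ fun _ _ => Iff.rfl

theorem BlackRowsOf.prune [Fintype C] {G : RBGraph S C} {M : C → S → Prop}
    (h : G.BlackRowsOf M) : G.prune.BlackRowsOf M :=
  Function.Iterate.rec (fun G' : RBGraph S C => G'.BlackRowsOf M) h
    (fun _ => BlackRowsOf.pruneStep) _

theorem BlackRowsOf.realize [Fintype C] {G : RBGraph S C} {M : C → S → Prop}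
    (h : G.BlackRowsOf M) (c : C) : (G.realize c).BlackRowsOf M :=
  BlackRowsOf.prune (h.of_black_iff (· ≠ c) fun _ _ => Iff.rfl)

theorem BlackRowsOf.realizeSeq [Fintype C] {G : RBGraph S C} {M : C → S → Prop}
    (h : G.BlackRowsOf M) (l : List C) : (G.realizeSeq l).BlackRowsOf M := by
  induction l generalizing G with
  | nil => exact h
  | cons c l ih => exact ih (h.realize c)

theorem blackRowsOf_partialRed [Fintype C] (M : C → S → Prop) (l : List C) (k : ℕ) :
    (partialRed M l k).BlackRowsOf M :=
  (blackRowsOf_ofMatrix M).realizeSeq _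

theorem ne_of_mem_CC_of_mem_CU {G : RBGraph S C} {c c' : C} (hc : c ∈ G.CC)
    (hc' : c' ∈ G.CU) : c ≠ c' := by
  rintro rfl
  obtain ⟨-, -, hcR⟩ := hc
  obtain ⟨-, ⟨s, ⟨-, hsB⟩, hs⟩, -⟩ := hc'
  obtain ⟨c'', hred⟩ := hcR s hs
  exact hsB c'' hred

theorem BlackRowsOf.row_subset_of_mem_CC_of_mem_CU {G : RBGraph S C} {M : C → S → Prop}
    (h : G.BlackRowsOf M) {c c' : C} (hc : c ∈ G.CC) (hc' : c' ∈ G.CU) :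
    ∀ s, M c s → M c' s := by
  obtain ⟨-, hc_black, hcR⟩ := hc
  obtain ⟨-, ⟨s₀, -, hs₀⟩, hc'R⟩ := hc'
  intro s hs
  rw [← h c hc_black s] at hs
  exact (h c' ⟨s₀, hs₀⟩ s).1 (hc'R s (hcR s hs))

end RBGraph

theorem CC_or_CU_empty_general {S C : Type} [Fintype C] (M : C → S → Prop)
    (hmax : RBGraph.MaximalM M)
    (l : List C) (k : ℕ) :
    (RBGraph.partialRed M l k).CC = ∅ ∨ (RBGraph.partialRed M l k).CU = ∅ := by
  rw [or_iff_not_imp_left]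
  intro hCC
  obtain ⟨c, hc⟩ := Set.nonempty_iff_ne_empty.2 hCC
  refine Set.eq_empty_of_forall_notMem fun c' hc' => ?_
  exact hmax c c' (RBGraph.ne_of_mem_CC_of_mem_CU hc hc')
    ((RBGraph.blackRowsOf_partialRed M l k).row_subset_of_mem_CC_of_mem_CU hc hc')

/-- at least one of `C_C` and `C_U` is empty. -/
theorem CC_or_CU_empty {S C : Type} [Fintype C] (M : C → S → Prop)
    (hmax : RBGraph.MaximalM M) (hconn : (RBGraph.ofMatrix M).toSimple.Connected)
    (l : List C) (hl : RBGraph.isReduction M l) (k : ℕ) (hk : k ≤ l.length) :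
    (RBGraph.partialRed M l k).CC = ∅ ∨ (RBGraph.partialRed M l k).CU = ∅ :=
  CC_or_CU_empty_general M hmax l k
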